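/- arXiv:1511.02573 — 2 statements merged into one kernel-verified Lean document; each statement's English description precedes it below -/
import Mathlib

section
/- Let E be a Banach space and u : B₁ → E be k-times strongly (Fréchet) differentiable with [D^k u]-bounds, where B₁ ⊆ ℝⁿ is the unit ball. For 0 ≤ s < r ≤ k + 1 (with fractional parts interpreted as Hölder seminorms of the integer-order derivatives) and any ε ∈ (0,1): [u]_{s;B₁} ≤ C ε^{r−s} [u]_{r;B₁} + C ε^{−s} |u|_{0;B₁}, where C depends only on n, and |u|_{0;B₁} = sup_{B₁} ‖u‖_E. (Interpolation inequality for Hölder seminorms of Banach-space-valued functions.) -/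
/-- Interpolation inequality for Banach-space-valued functions on the unit ball
(Lemma 5.2, case `s = 1`, `r = 2`): if `u` is twice differentiable on `B₁` with
`‖u‖ ≤ M₀` and `‖D²u‖ ≤ M₂`, then `‖Du(x)‖ ≤ C ε M₂ + C ε⁻¹ M₀` for all `x ∈ B₁`
and `ε ∈ (0,1)`, where `C = C(n)`. -/
theorem stmt9 (n : ℕ) :
    ∃ C : ℝ, 0 < C ∧
      ∀ (E : Type) [inst : NormedAddCommGroup E] [inst2 : NormedSpace ℝ E]
        (u : EuclideanSpace ℝ (Fin n) → E)
        (u' : EuclideanSpace ℝ (Fin n) → EuclideanSpace ℝ (Fin n) →L[ℝ] E)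
        (u'' : EuclideanSpace ℝ (Fin n) →
          EuclideanSpace ℝ (Fin n) →L[ℝ] (EuclideanSpace ℝ (Fin n) →L[ℝ] E))
        (M0 M2 ε : ℝ),
        (∀ x ∈ Metric.ball (0 : EuclideanSpace ℝ (Fin n)) 1, HasFDerivAt u (u' x) x) →
        (∀ x ∈ Metric.ball (0 : EuclideanSpace ℝ (Fin n)) 1, HasFDerivAt u' (u'' x) x) →
        (∀ x ∈ Metric.ball (0 : EuclideanSpace ℝ (Fin n)) 1, ‖u x‖ ≤ M0) →
        (∀ x ∈ Metric.ball (0 : EuclideanSpace ℝ (Fin n)) 1, ‖u'' x‖ ≤ M2) →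
        0 < ε → ε < 1 →
        ∀ x ∈ Metric.ball (0 : EuclideanSpace ℝ (Fin n)) 1,
          ‖u' x‖ ≤ C * ε * M2 + C * ε⁻¹ * M0 := by
  refine ⟨2, by norm_num, ?_⟩
  intro E _ _ u u' u'' M0 M2 ε hu hu' hM0 hM2 hε hε1 x hx
  set B := Metric.ball (0 : EuclideanSpace ℝ (Fin n)) 1 with hBdef
  have h0B : (0 : EuclideanSpace ℝ (Fin n)) ∈ B := by
    simp [hBdef, Metric.mem_ball]
  have hconv : Convex ℝ B := convex_ball 0 1
  have hM2nn : 0 ≤ M2 := (norm_nonneg (u'' 0)).trans (hM2 0 h0B)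
  have hM0nn : 0 ≤ M0 := (norm_nonneg (u 0)).trans (hM0 0 h0B)
  -- u' is M2-Lipschitz on B
  have hlip : ∀ a ∈ B, ∀ b ∈ B, ‖u' b - u' a‖ ≤ M2 * ‖b - a‖ := by
    intro a ha b hb
    exact hconv.norm_image_sub_le_of_norm_hasFDerivWithin_le
      (fun z hz => (hu' z hz).hasFDerivWithinAt) (fun z hz => hM2 z hz) ha hb
  have hxnorm : ‖x‖ < 1 := by
    simpa [hBdef, Metric.mem_ball] using hx
  set y : EuclideanSpace ℝ (Fin n) := (1 - ε) • x with hydef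
  have hyn : ‖y‖ = (1 - ε) * ‖x‖ := by
    rw [hydef, norm_smul, Real.norm_eq_abs, abs_of_nonneg (by linarith : (0:ℝ) ≤ 1 - ε)]
  have hynlt : ‖y‖ < 1 - ε := by
    rw [hyn]
    calc (1 - ε) * ‖x‖ < (1 - ε) * 1 := by
          apply mul_lt_mul_of_pos_left hxnorm (by linarith)
      _ = 1 - ε := by ring
  have hyB : y ∈ B := by
    simp only [hBdef, Metric.mem_ball, dist_zero_right]
    linarith
  -- key estimate at y
  have key : ‖u' y‖ ≤ ε * M2 + 2 * ε⁻¹ * M0 := by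
    apply ContinuousLinearMap.opNorm_le_bound
    · have : 0 ≤ ε * M2 := mul_nonneg hε.le hM2nn
      have : 0 ≤ ε⁻¹ * M0 := mul_nonneg (inv_nonneg.mpr hε.le) hM0nn
      linarith
    intro z
    rcases eq_or_ne z 0 with rfl | hz
    · simp
    have hznorm : 0 < ‖z‖ := norm_pos_iff.mpr hz
    set w : EuclideanSpace ℝ (Fin n) := (ε / ‖z‖) • z with hwdef
    have hwn : ‖w‖ = ε := by
      rw [hwdef, norm_smul, Real.norm_eq_abs, abs_of_pos (div_pos hε hznorm)]
      field_simp
    have hywB : y + w ∈ B := by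
      simp only [hBdef, Metric.mem_ball, dist_zero_right]
      calc ‖y + w‖ ≤ ‖y‖ + ‖w‖ := norm_add_le _ _
        _ < (1 - ε) + ε := by rw [hwn]; linarith
        _ = 1 := by ring
    -- segment from y to y+w
    have hseg : segment ℝ y (y + w) ⊆ B := hconv.segment_subset hyB hywB
    have hsegconv : Convex ℝ (segment ℝ y (y + w)) := convex_segment _ _
    -- g z = u z - u' y z has derivative u' z - u' y
    have hkey : ‖(u (y + w) - u' y (y + w)) - (u y - u' y y)‖ ≤ M2 * ε * ‖(y + w) - y‖ := by
      apply hsegconv.norm_image_sub_le_of_norm_hasFDerivWithin_le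
        (f := fun z => u z - u' y z) (f' := fun z => u' z - u' y)
      · intro z hzs
        exact ((hu z (hseg hzs)).sub ((u' y).hasFDerivAt)).hasFDerivWithinAt.mono (by tauto)
      · intro z hzs
        calc ‖u' z - u' y‖ ≤ M2 * ‖z - y‖ := hlip y hyB z (hseg hzs)
          _ ≤ M2 * ε := by
              apply mul_le_mul_of_nonneg_left _ hM2nn
              -- z ∈ segment y (y+w) so ‖z - y‖ ≤ ‖w‖ = ε
              obtain ⟨a, b, ha, hb, hab, rfl⟩ := hzs
              have : a • y + b • (y + w) - y = b • w := by
                rw [smul_add, ← add_assoc, ← add_smul, hab, one_smul, add_sub_cancel_left]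
              rw [this, norm_smul, Real.norm_eq_abs, abs_of_nonneg hb, hwn]
              nlinarith
      · exact left_mem_segment ℝ _ _
      · exact right_mem_segment ℝ _ _
    have hww : ‖(y + w) - y‖ = ε := by rw [add_sub_cancel_left, hwn]
    rw [hww] at hkey
    have huyw : ‖u' y w‖ ≤ 2 * M0 + M2 * ε * ε := by
      have h1 : u' y (y + w) - u' y y = u' y w := by rw [← map_sub, add_sub_cancel_left]
      have h2 : ‖u (y + w) - u y‖ ≤ 2 * M0 := by
        calc ‖u (y + w) - u y‖ ≤ ‖u (y + w)‖ + ‖u y‖ := norm_sub_le _ _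
          _ ≤ M0 + M0 := add_le_add (hM0 _ hywB) (hM0 _ hyB)
          _ = 2 * M0 := by ring
      calc ‖u' y w‖ = ‖(u (y + w) - u y) - ((u (y + w) - u' y (y + w)) - (u y - u' y y))‖ := by
            rw [← h1]; congr 1; abel
        _ ≤ ‖u (y + w) - u y‖ + ‖(u (y + w) - u' y (y + w)) - (u y - u' y y)‖ :=
            norm_sub_le _ _
        _ ≤ 2 * M0 + M2 * ε * ε := add_le_add h2 hkey
    -- scale back: z = (‖z‖/ε) • w
    have hzw : u' y z = (‖z‖ / ε) • u' y w := by
      rw [← map_smul, hwdef, smul_smul]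
      congr 1
      rw [show ‖z‖ / ε * (ε / ‖z‖) = 1 by field_simp, one_smul]
    rw [hzw, norm_smul, Real.norm_eq_abs, abs_of_nonneg (div_nonneg hznorm.le hε.le)]
    calc ‖z‖ / ε * ‖u' y w‖ ≤ ‖z‖ / ε * (2 * M0 + M2 * ε * ε) := by
          apply mul_le_mul_of_nonneg_left huyw (div_nonneg hznorm.le hε.le)
      _ = (ε * M2 + 2 * ε⁻¹ * M0) * ‖z‖ := by field_simp; ring
  -- transfer from y to x
  have hxy : ‖x - y‖ ≤ ε := by
    have : x - y = ε • x := by rw [hydef]; module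
    rw [this, norm_smul, Real.norm_eq_abs, abs_of_pos hε]
    nlinarith
  have hlipxy : ‖u' x - u' y‖ ≤ M2 * ε := by
    calc ‖u' x - u' y‖ ≤ M2 * ‖x - y‖ := hlip y hyB x hx
      _ ≤ M2 * ε := mul_le_mul_of_nonneg_left hxy hM2nn
  calc ‖u' x‖ = ‖(u' x - u' y) + u' y‖ := by rw [sub_add_cancel]
    _ ≤ ‖u' x - u' y‖ + ‖u' y‖ := norm_add_le _ _
    _ ≤ M2 * ε + (ε * M2 + 2 * ε⁻¹ * M0) := add_le_add hlipxy key
    _ = 2 * ε * M2 + 2 * ε⁻¹ * M0 := by ring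
end

section
/- Let E be a Banach space, p ≥ 1, u : B₁ → E continuous with finite Hölder seminorm [u]_{1+α} of its gradient (i.e. u ∈ C^{1+α}(B₁;E)), α ∈ (0,1). Then for every ε ∈ (0,1/2): sup_{B₁}‖u‖_E ≤ C ε^{1+α} [Du]_{α;B₁} + C ε^{−n/p} ‖u‖_{L^p(B₁;E)}, where C = C(n,p). (Combination of the Hölder interpolation with the L^p lower-order replacement, Lemma 5.2 case r = 1+α, s = 0.) -/
/-!
Fix `r = min ε (1/18)`. For `w ∈ B₁` put `c = (1 - 2r) w`; then `B(c, r) ⊆ B₁`, and it contains a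
point `y` where `‖u‖^p` is at most its average, so `‖u y‖ ≲ r^{-n/p} ‖u‖_{L^p(B₁)}`. The point
`y - 8 (w - y)` still lies in `B₁`, so the first-order Taylor expansions at `y` give
`8 ‖u w - u y‖ ≤ ‖u y‖ + sup_{B₁} ‖u‖ + O(H r^{1+α})`. Taking the supremum over `w`, the term
`sup_{B₁} ‖u‖ / 8` is absorbed into the left-hand side.
-/

open MeasureTheory Metric

section HolderDerivative

variable {E F : Type*} [NormedAddCommGroup E] [NormedSpace ℝ E]
  [NormedAddCommGroup F] [NormedSpace ℝ F]
  {u : E → F} {u' : E → E →L[ℝ] F} {s : Set E} {H α : ℝ}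

theorem Convex.norm_sub_sub_fderiv_le_of_holder (hs : Convex ℝ s)
    (hu : ∀ x ∈ s, HasFDerivWithinAt u (u' x) s x) (hH : 0 ≤ H) (hα : 0 ≤ α)
    (hol : ∀ x ∈ s, ∀ y ∈ s, ‖u' x - u' y‖ ≤ H * ‖x - y‖ ^ α) {x y : E}
    (hx : x ∈ s) (hy : y ∈ s) :
    ‖u y - u x - u' x (y - x)‖ ≤ H * ‖y - x‖ ^ (1 + α) := by
  have bound : ∀ z ∈ s ∩ closedBall x ‖y - x‖, ‖u' z - u' x‖ ≤ H * ‖y - x‖ ^ α := fun z hz =>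
    (hol z hz.1 x hx).trans (mul_le_mul_of_nonneg_left
      (Real.rpow_le_rpow (norm_nonneg _) (mem_closedBall_iff_norm.mp hz.2) hα) hH)
  calc ‖u y - u x - u' x (y - x)‖ ≤ H * ‖y - x‖ ^ α * ‖y - x‖ :=
        (hs.inter (convex_closedBall _ _)).norm_image_sub_le_of_norm_hasFDerivWithin_le'
          (fun z hz => (hu z hz.1).mono Set.inter_subset_left) bound
          ⟨hx, mem_closedBall_self (norm_nonneg _)⟩ ⟨hy, mem_closedBall_iff_norm.mpr le_rfl⟩
    _ = H * ‖y - x‖ ^ (1 + α) := by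
        rw [Real.rpow_add' (norm_nonneg _) (by linarith), Real.rpow_one]; ring

theorem Convex.bddAbove_norm_image_of_holder_fderiv (hs : Convex ℝ s)
    (hu : ∀ x ∈ s, HasFDerivWithinAt u (u' x) s x) (hH : 0 ≤ H) (hα : 0 ≤ α)
    (hol : ∀ x ∈ s, ∀ y ∈ s, ‖u' x - u' y‖ ≤ H * ‖x - y‖ ^ α) (hb : Bornology.IsBounded s) :
    BddAbove ((fun x => ‖u x‖) '' s) := by
  rcases s.eq_empty_or_nonempty with rfl | ⟨x₀, hx₀⟩
  · simp
  obtain ⟨R, hR⟩ := hb.subset_closedBall x₀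
  refine ⟨‖u x₀‖ + ‖u' x₀‖ * R + H * R ^ (1 + α), ?_⟩
  rintro _ ⟨y, hy, rfl⟩
  have hyR : ‖y - x₀‖ ≤ R := mem_closedBall_iff_norm.mp (hR hy)
  have taylor := hs.norm_sub_sub_fderiv_le_of_holder hu hH hα hol hx₀ hy
  have linear : ‖u' x₀ (y - x₀)‖ ≤ ‖u' x₀‖ * R :=
    (u' x₀).le_opNorm_of_le hyR
  have remainder : H * ‖y - x₀‖ ^ (1 + α) ≤ H * R ^ (1 + α) := by gcongr
  calc ‖u y‖ = ‖u x₀ + u' x₀ (y - x₀) + (u y - u x₀ - u' x₀ (y - x₀))‖ := by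
        congr 1; abel
    _ ≤ ‖u x₀‖ + ‖u' x₀ (y - x₀)‖ + ‖u y - u x₀ - u' x₀ (y - x₀)‖ := norm_add₃_le
    _ ≤ _ := by linarith

/-- Taylor expansions at `x` in the directions `h` and `-t • h` share the linear term, so
`u' x h` is controlled by a difference of values of `u`. -/
theorem Convex.mul_norm_sub_le_of_holder_fderiv (hs : Convex ℝ s)
    (hu : ∀ x ∈ s, HasFDerivWithinAt u (u' x) s x) (hH : 0 ≤ H) (hα : 0 ≤ α)
    (hol : ∀ x ∈ s, ∀ y ∈ s, ‖u' x - u' y‖ ≤ H * ‖x - y‖ ^ α) {x h : E} {t : ℝ} (ht : 0 < t)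
    (hx : x ∈ s) (hxh : x + h ∈ s) (hxth : x - t • h ∈ s) :
    t * ‖u (x + h) - u x‖ ≤ ‖u (x - t • h) - u x‖ + H * (t ^ (1 + α) + t) * ‖h‖ ^ (1 + α) := by
  have forward := hs.norm_sub_sub_fderiv_le_of_holder hu hH hα hol hx hxh
  have backward := hs.norm_sub_sub_fderiv_le_of_holder hu hH hα hol hx hxth
  rw [add_sub_cancel_left] at forward
  rw [sub_sub_cancel_left, map_neg, sub_neg_eq_add, norm_neg, norm_smul, Real.norm_eq_abs,
    abs_of_pos ht, Real.mul_rpow ht.le (norm_nonneg _)] at backward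
  have derivative : t * ‖u' x h‖ ≤ ‖u (x - t • h) - u x‖ + H * t ^ (1 + α) * ‖h‖ ^ (1 + α) := by
    calc t * ‖u' x h‖ = ‖u (x - t • h) - u x + u' x (t • h) - (u (x - t • h) - u x)‖ := by
          rw [map_smul, add_sub_cancel_left, norm_smul, Real.norm_eq_abs, abs_of_pos ht]
      _ ≤ ‖u (x - t • h) - u x + u' x (t • h)‖ + ‖u (x - t • h) - u x‖ := norm_sub_le _ _
      _ ≤ _ := by linarith
  calc t * ‖u (x + h) - u x‖ = t * ‖u' x h + (u (x + h) - u x - u' x h)‖ := by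
        congr 2; abel
    _ ≤ t * (‖u' x h‖ + H * ‖h‖ ^ (1 + α)) := by
        gcongr; exact (norm_add_le _ _).trans (by linarith)
    _ ≤ _ := by linarith

theorem ball_smul_subset_ball_zero_one {w : E} {r : ℝ} (hw : w ∈ ball (0 : E) 1)
    (hr : r ≤ 1 / 2) :
    ball ((1 - 2 * r) • w) r ⊆ ball (0 : E) 1 := by
  intro y hy
  rw [mem_ball_iff_norm] at hy
  rw [mem_ball_zero_iff] at hw ⊢
  have hr0 : 0 < r := (norm_nonneg _).trans_lt hy
  calc ‖y‖ = ‖(y - (1 - 2 * r) • w) + (1 - 2 * r) • w‖ := by rw [sub_add_cancel]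
    _ ≤ ‖y - (1 - 2 * r) • w‖ + (1 - 2 * r) * ‖w‖ := by
        refine (norm_add_le _ _).trans_eq ?_
        rw [norm_smul, Real.norm_eq_abs, abs_of_nonneg (by linarith)]
    _ < 1 := by nlinarith

theorem sub_smul_sub_mem_ball_zero_one {w y : E} {r : ℝ} (hw : w ∈ ball (0 : E) 1)
    (hr : r ≤ 1 / 18) (hy : y ∈ ball ((1 - 2 * r) • w) r) :
    y - (8 : ℝ) • (w - y) ∈ ball (0 : E) 1 := by
  rw [mem_ball_iff_norm] at hy
  rw [mem_ball_zero_iff] at hw ⊢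
  have hr0 : 0 < r := (norm_nonneg _).trans_lt hy
  calc ‖y - (8 : ℝ) • (w - y)‖ = ‖(9 : ℝ) • (y - (1 - 2 * r) • w) + (1 - 18 * r) • w‖ := by
        congr 1; module
    _ ≤ 9 * ‖y - (1 - 2 * r) • w‖ + (1 - 18 * r) * ‖w‖ := by
        refine (norm_add_le _ _).trans_eq ?_
        rw [norm_smul, norm_smul, Real.norm_eq_abs, Real.norm_eq_abs, abs_of_pos (by norm_num),
          abs_of_nonneg (by linarith)]
    _ < 1 := by nlinarith

theorem norm_sub_le_of_mem_ball_smul {w y : E} {r : ℝ} (hw : w ∈ ball (0 : E) 1)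
    (hy : y ∈ ball ((1 - 2 * r) • w) r) : ‖w - y‖ ≤ 3 * r := by
  rw [mem_ball_iff_norm] at hy
  rw [mem_ball_zero_iff] at hw
  have hr0 : 0 < r := (norm_nonneg _).trans_lt hy
  calc ‖w - y‖ = ‖(2 * r) • w - (y - (1 - 2 * r) • w)‖ := by congr 1; module
    _ ≤ 2 * r * ‖w‖ + ‖y - (1 - 2 * r) • w‖ := by
        refine (norm_sub_le _ _).trans_eq ?_
        rw [norm_smul, Real.norm_eq_abs, abs_of_pos (by linarith)]
    _ ≤ 3 * r := by nlinarith

theorem norm_le_of_mem_ball_smul_of_holder_fderiv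
    (hu : ∀ x ∈ ball (0 : E) 1, HasFDerivWithinAt u (u' x) (ball 0 1) x) (hH : 0 ≤ H)
    (hα : 0 ≤ α) (hol : ∀ x ∈ ball (0 : E) 1, ∀ y ∈ ball (0 : E) 1,
      ‖u' x - u' y‖ ≤ H * ‖x - y‖ ^ α)
    {M : ℝ} (hM : ∀ x ∈ ball (0 : E) 1, ‖u x‖ ≤ M) {r : ℝ} (hr : r ≤ 1 / 18) {w y : E}
    (hw : w ∈ ball (0 : E) 1) (hy : y ∈ ball ((1 - 2 * r) • w) r) :
    8 * ‖u w‖ ≤ 9 * ‖u y‖ + M + H * (8 ^ (1 + α) + 8) * (3 * r) ^ (1 + α) := by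
  have hyB : y ∈ ball (0 : E) 1 := ball_smul_subset_ball_zero_one hw (by linarith) hy
  have hreflect := sub_smul_sub_mem_ball_zero_one hw hr hy
  have hwy : ‖w - y‖ ≤ 3 * r := norm_sub_le_of_mem_ball_smul hw hy
  have key := (convex_ball (0 : E) 1).mul_norm_sub_le_of_holder_fderiv hu hH hα hol
    (by norm_num : (0 : ℝ) < 8) hyB (by rwa [add_sub_cancel]) hreflect
  rw [add_sub_cancel] at key
  have remainder : H * (8 ^ (1 + α) + 8) * ‖w - y‖ ^ (1 + α)
      ≤ H * (8 ^ (1 + α) + 8) * (3 * r) ^ (1 + α) := by gcongr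
  have far : ‖u (y - (8 : ℝ) • (w - y)) - u y‖ ≤ M + ‖u y‖ :=
    (norm_sub_le _ _).trans (by linarith [hM _ hreflect])
  have near : ‖u w‖ ≤ ‖u y‖ + ‖u w - u y‖ := norm_le_insert' _ _
  linarith

end HolderDerivative

section Averaging

variable {E F : Type*} [NormedAddCommGroup E] [NormedSpace ℝ E] [FiniteDimensional ℝ E]
  [MeasurableSpace E] [BorelSpace E] (μ : Measure E) [μ.IsAddHaarMeasure]
  [NormedAddCommGroup F] {u : E → F} {p : ℝ}

theorem exists_mem_ball_norm_le_rpow_integral_div (hp : 0 < p) {s : Set E} {c : E} {r : ℝ}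
    (hr : 0 < r) (hcs : ball c r ⊆ s) (hint : IntegrableOn (fun z => ‖u z‖ ^ p) s μ) :
    ∃ y ∈ ball c r, ‖u y‖ ≤ ((∫ z in s, ‖u z‖ ^ p ∂μ) / μ.real (ball 0 r)) ^ (1 / p) := by
  have hnonneg : ∀ z, 0 ≤ ‖u z‖ ^ p := fun z => Real.rpow_nonneg (norm_nonneg _) _
  obtain ⟨y, hy, hle⟩ := exists_le_setAverage (measure_ball_pos μ c hr).ne'
    measure_ball_lt_top.ne (hint.mono_set hcs)
  refine ⟨y, hy, ?_⟩
  rw [one_div, Real.le_rpow_inv_iff_of_pos (norm_nonneg _)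
    (div_nonneg (integral_nonneg hnonneg) measureReal_nonneg) hp]
  calc ‖u y‖ ^ p ≤ ⨍ z in ball c r, ‖u z‖ ^ p ∂μ := hle
    _ = (∫ z in ball c r, ‖u z‖ ^ p ∂μ) / μ.real (ball 0 r) := by
        rw [setAverage_eq, smul_eq_mul, Measure.addHaar_real_ball_center, inv_mul_eq_div]
    _ ≤ _ := div_le_div_of_nonneg_right
        (setIntegral_mono_set hint (.of_forall hnonneg) hcs.eventuallyLE) measureReal_nonneg

variable [NormedSpace ℝ F] {u' : E → E →L[ℝ] F} {H α : ℝ}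

theorem norm_le_of_holder_fderiv_of_radius (hp : 0 < p)
    (hu : ∀ x ∈ ball (0 : E) 1, HasFDerivWithinAt u (u' x) (ball 0 1) x) (hH : 0 ≤ H)
    (hα : 0 ≤ α) (hol : ∀ x ∈ ball (0 : E) 1, ∀ y ∈ ball (0 : E) 1,
      ‖u' x - u' y‖ ≤ H * ‖x - y‖ ^ α)
    {r : ℝ} (hr0 : 0 < r) (hr : r ≤ 1 / 18) {x : E} (hx : x ∈ ball (0 : E) 1) :
    ‖u x‖ ≤ 2 * ((∫ z in ball (0 : E) 1, ‖u z‖ ^ p ∂μ) / μ.real (ball 0 r)) ^ (1 / p)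
      + H * (8 ^ (1 + α) + 8) * (3 * r) ^ (1 + α) := by
  set B := ball (0 : E) 1
  set Y := ((∫ z in B, ‖u z‖ ^ p ∂μ) / μ.real (ball 0 r)) ^ (1 / p)
  set K := H * (8 ^ (1 + α) + 8) * (3 * r) ^ (1 + α)
  set M := sSup ((fun z => ‖u z‖) '' B)
  have hbdd := (convex_ball (0 : E) 1).bddAbove_norm_image_of_holder_fderiv hu hH hα hol
    isBounded_ball
  have hM : ∀ z ∈ B, ‖u z‖ ≤ M := fun z hz => le_csSup hbdd ⟨z, hz, rfl⟩
  have hint : IntegrableOn (fun z => ‖u z‖ ^ p) B μ := by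
    have : IsFiniteMeasure (μ.restrict B) := isFiniteMeasure_restrict.2 measure_ball_lt_top.ne
    have hcont : ContinuousOn u B := fun z hz => (hu z hz).continuousWithinAt
    refine Integrable.mono' (integrable_const (M ^ p))
      ((hcont.norm.rpow_const fun _ _ => Or.inr hp.le).aestronglyMeasurable measurableSet_ball) ?_
    filter_upwards [ae_restrict_mem measurableSet_ball] with z hz
    rw [Real.norm_eq_abs, abs_of_nonneg (Real.rpow_nonneg (norm_nonneg _) _)]
    exact Real.rpow_le_rpow (norm_nonneg _) (hM z hz) hp.le
  have hpoint : ∀ w ∈ B, 8 * ‖u w‖ ≤ 9 * Y + M + K := by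
    intro w hw
    obtain ⟨y, hy, hyY⟩ := exists_mem_ball_norm_le_rpow_integral_div μ hp hr0
      (ball_smul_subset_ball_zero_one hw (by linarith)) hint
    linarith [norm_le_of_mem_ball_smul_of_holder_fderiv hu hH hα hol hM hr hw hy]
  have hMle : M ≤ (9 * Y + M + K) / 8 :=
    csSup_le ((nonempty_ball.2 one_pos).image _) (by
      rintro _ ⟨w, hw, rfl⟩
      linarith [hpoint w hw])
  have hY : 0 ≤ Y := Real.rpow_nonneg
    (div_nonneg (integral_nonneg fun _ => Real.rpow_nonneg (norm_nonneg _) _) measureReal_nonneg) _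
  have hK : 0 ≤ K := by positivity
  linarith [hM x hx]

end Averaging

theorem Real.rpow_one_div_div_pow_mul_le {I ω ε r k p : ℝ} {n : ℕ} (hI : 0 ≤ I) (hω : 0 < ω)
    (hε : 0 < ε) (hk : 0 < k) (hr : ε / k ≤ r) (hp : 0 < p) :
    (I / (r ^ n * ω)) ^ (1 / p) ≤ (k ^ n / ω) ^ (1 / p) * ε ^ (-(n : ℝ) / p) * I ^ (1 / p) := by
  have hr0 : 0 < r := (div_pos hε hk).trans_le hr
  calc (I / (r ^ n * ω)) ^ (1 / p) ≤ (I / ((ε / k) ^ n * ω)) ^ (1 / p) := by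
        gcongr
    _ = (k ^ n / ω * (ε ^ (n : ℝ))⁻¹ * I) ^ (1 / p) := by
        rw [Real.rpow_natCast, div_pow]; field_simp
    _ = _ := by
        rw [Real.mul_rpow (by positivity) hI, Real.mul_rpow (by positivity) (by positivity),
          Real.inv_rpow (by positivity), ← Real.rpow_mul hε.le, ← Real.rpow_neg hε.le]
        ring_nf

theorem stmt10_general (n : ℕ) (p α : ℝ) (hp : 1 ≤ p) (hα : 0 < α) :
    ∃ C : ℝ, 0 < C ∧
      ∀ (E : Type) [inst : NormedAddCommGroup E] [inst2 : NormedSpace ℝ E]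
        (u : EuclideanSpace ℝ (Fin n) → E)
        (u' : EuclideanSpace ℝ (Fin n) → EuclideanSpace ℝ (Fin n) →L[ℝ] E)
        (H ε : ℝ),
        ContinuousOn u (Metric.ball (0 : EuclideanSpace ℝ (Fin n)) 1) →
        (∀ x ∈ Metric.ball (0 : EuclideanSpace ℝ (Fin n)) 1, HasFDerivAt u (u' x) x) →
        0 ≤ H →
        (∀ x ∈ Metric.ball (0 : EuclideanSpace ℝ (Fin n)) 1,
          ∀ y ∈ Metric.ball (0 : EuclideanSpace ℝ (Fin n)) 1,
            ‖u' x - u' y‖ ≤ H * ‖x - y‖ ^ α) →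
        0 < ε → ε < 1 / 2 →
        ∀ x ∈ Metric.ball (0 : EuclideanSpace ℝ (Fin n)) 1,
          ‖u x‖ ≤ C * ε ^ (1 + α) * H +
            C * ε ^ (-(n : ℝ) / p) *
              (∫ z in Metric.ball (0 : EuclideanSpace ℝ (Fin n)) 1, ‖u z‖ ^ p) ^ (1 / p) := by
  have hp0 : 0 < p := by linarith
  set ω := volume.real (ball (0 : EuclideanSpace ℝ (Fin n)) 1)
  have hω : 0 < ω := ENNReal.toReal_pos (measure_ball_pos _ _ one_pos).ne' measure_ball_lt_top.ne
  set a := 2 * (9 ^ n / ω) ^ (1 / p)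
  set b : ℝ := (8 ^ (1 + α) + 8) * 3 ^ (1 + α)
  have ha : 0 ≤ a := by positivity
  have hb : 0 ≤ b := by positivity
  refine ⟨a + b, by positivity, ?_⟩
  intro E _ _ u u' H ε _ hu hH hol hε hε2 x hx
  set r := min ε (1 / 18)
  have hr0 : 0 < r := lt_min hε (by norm_num)
  have hεr : ε / 9 ≤ r := le_min (by linarith) (by linarith)
  have hvol : volume.real (ball (0 : EuclideanSpace ℝ (Fin n)) r) = r ^ n * ω := by
    rw [measureReal_def, Measure.addHaar_ball_of_pos _ _ hr0, finrank_euclideanSpace_fin,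
      ENNReal.toReal_mul, ENNReal.toReal_ofReal (by positivity)]
    rfl
  have hI : 0 ≤ ∫ z in ball (0 : EuclideanSpace ℝ (Fin n)) 1, ‖u z‖ ^ p :=
    integral_nonneg fun _ => Real.rpow_nonneg (norm_nonneg _) _
  have bound := norm_le_of_holder_fderiv_of_radius volume hp0
    (fun z hz => (hu z hz).hasFDerivWithinAt) hH hα.le hol hr0 (min_le_right _ _) hx
  rw [hvol] at bound
  have average := Real.rpow_one_div_div_pow_mul_le (n := n) hI hω hε (by norm_num) hεr hp0
  have holder : (3 * r) ^ (1 + α) ≤ 3 ^ (1 + α) * ε ^ (1 + α) := by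
    rw [Real.mul_rpow (by norm_num) hr0.le]
    gcongr
    exact min_le_left _ _
  have hεH : 0 ≤ ε ^ (1 + α) * H := by positivity
  have hεJ : 0 ≤ ε ^ (-(n : ℝ) / p) *
      (∫ z in ball (0 : EuclideanSpace ℝ (Fin n)) 1, ‖u z‖ ^ p) ^ (1 / p) := by positivity
  calc ‖u x‖ ≤ 2 * ((9 ^ n / ω) ^ (1 / p) * ε ^ (-(n : ℝ) / p) *
          (∫ z in ball (0 : EuclideanSpace ℝ (Fin n)) 1, ‖u z‖ ^ p) ^ (1 / p))
        + H * (8 ^ (1 + α) + 8) * (3 ^ (1 + α) * ε ^ (1 + α)) := by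
        refine bound.trans ?_
        gcongr
    _ ≤ _ := by linarith [mul_nonneg ha hεH, mul_nonneg hb hεJ]

/-- Lemma 5.2 with `r = 1 + α`, `s = 0`: for `u ∈ C^{1+α}(B₁; E)` and `ε ∈ (0,1/2)`,
`sup_{B₁} ‖u‖ ≤ C ε^{1+α} [Du]_{α;B₁} + C ε^{−n/p} ‖u‖_{L^p(B₁;E)}`, `C = C(n,p)`. -/
theorem stmt10 (n : ℕ) (p α : ℝ) (hp : 1 ≤ p) (hα : 0 < α) (hα1 : α < 1) :
    ∃ C : ℝ, 0 < C ∧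
      ∀ (E : Type) [inst : NormedAddCommGroup E] [inst2 : NormedSpace ℝ E]
        (u : EuclideanSpace ℝ (Fin n) → E)
        (u' : EuclideanSpace ℝ (Fin n) → EuclideanSpace ℝ (Fin n) →L[ℝ] E)
        (H ε : ℝ),
        ContinuousOn u (Metric.ball (0 : EuclideanSpace ℝ (Fin n)) 1) →
        (∀ x ∈ Metric.ball (0 : EuclideanSpace ℝ (Fin n)) 1, HasFDerivAt u (u' x) x) →
        0 ≤ H →
        (∀ x ∈ Metric.ball (0 : EuclideanSpace ℝ (Fin n)) 1,
          ∀ y ∈ Metric.ball (0 : EuclideanSpace ℝ (Fin n)) 1,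
            ‖u' x - u' y‖ ≤ H * ‖x - y‖ ^ α) →
        0 < ε → ε < 1 / 2 →
        ∀ x ∈ Metric.ball (0 : EuclideanSpace ℝ (Fin n)) 1,
          ‖u x‖ ≤ C * ε ^ (1 + α) * H +
            C * ε ^ (-(n : ℝ) / p) *
              (∫ z in Metric.ball (0 : EuclideanSpace ℝ (Fin n)) 1, ‖u z‖ ^ p) ^ (1 / p) :=
  stmt10_general n p α hp hα
end
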